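/- Under Assumptions 1 and 2, with GTT stepsize 0 < γ < 2/L, ρ := max{|1−γm|, |1−γL|}, σ := 1 + h·(C₀C₁/m² + C₂/m), and Γ := (h²/2)·(C₀²C₁/m³ + 2C₀C₂/m² + C₃/m), the full prediction-correction iteration of GTT satisfies the one-step recursion ‖x_{k+1} − x*(t_{k+1})‖ ≤ ρ^τ·σ·‖x_k − x*(t_k)‖ + ρ^τ·Γ for every k ≥ 0. -/

import Mathlib

noncomputable section

/-- The setting of a time-varying, smooth, strongly convex optimization problem
`min_{x ∈ ℝⁿ} f(x;t)`, bundling the objective `f`, its derivatives, the Hessian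
inverse, the optimal trajectory `x*(t)`, and Assumptions 1 and 2 of the paper. -/
structure TVOpt (n : ℕ) where
  /-- the objective `f(x;t)` -/
  f : EuclideanSpace ℝ (Fin n) → ℝ → ℝ
  /-- the gradient `∇ₓ f(x;t)` -/
  grad : EuclideanSpace ℝ (Fin n) → ℝ → EuclideanSpace ℝ (Fin n)
  /-- the Hessian `∇ₓₓ f(x;t)` -/
  hess : EuclideanSpace ℝ (Fin n) → ℝ →
    EuclideanSpace ℝ (Fin n) →L[ℝ] EuclideanSpace ℝ (Fin n)
  /-- the Hessian inverse `[∇ₓₓ f(x;t)]⁻¹` -/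
  hessInv : EuclideanSpace ℝ (Fin n) → ℝ →
    EuclideanSpace ℝ (Fin n) →L[ℝ] EuclideanSpace ℝ (Fin n)
  /-- the mixed partial derivative `∇_{tx} f(x;t)` -/
  dtgrad : EuclideanSpace ℝ (Fin n) → ℝ → EuclideanSpace ℝ (Fin n)
  /-- the third derivative tensor `∇ₓₓₓ f(x;t)` -/
  d3 : EuclideanSpace ℝ (Fin n) → ℝ →
    EuclideanSpace ℝ (Fin n) →L[ℝ] EuclideanSpace ℝ (Fin n) →L[ℝ] EuclideanSpace ℝ (Fin n)
  /-- the time derivative of the Hessian `∇_{xtx} f(x;t)` -/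
  dthess : EuclideanSpace ℝ (Fin n) → ℝ →
    EuclideanSpace ℝ (Fin n) →L[ℝ] EuclideanSpace ℝ (Fin n)
  /-- the second time derivative of the gradient `∇_{ttx} f(x;t)` -/
  dttgrad : EuclideanSpace ℝ (Fin n) → ℝ → EuclideanSpace ℝ (Fin n)
  /-- the optimal trajectory `x*(t)` -/
  xstar : ℝ → EuclideanSpace ℝ (Fin n)
  /-- strong convexity constant -/
  m : ℝ
  /-- Hessian norm bound (gradient Lipschitz constant) -/
  L : ℝ
  C0 : ℝ
  C1 : ℝ
  C2 : ℝ
  C3 : ℝ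
  m_pos : 0 < m
  grad_spec : ∀ (x : EuclideanSpace ℝ (Fin n)) (t : ℝ), HasGradientAt (fun y => f y t) (grad x t) x
  hess_spec : ∀ (x : EuclideanSpace ℝ (Fin n)) (t : ℝ), HasFDerivAt (fun y => grad y t) (hess x t) x
  dtgrad_spec : ∀ (x : EuclideanSpace ℝ (Fin n)) (t : ℝ), HasDerivAt (fun s => grad x s) (dtgrad x t) t
  d3_spec : ∀ (x : EuclideanSpace ℝ (Fin n)) (t : ℝ), HasFDerivAt (fun y => hess y t) (d3 x t) x
  dthess_spec : ∀ (x : EuclideanSpace ℝ (Fin n)) (t : ℝ), HasDerivAt (fun s => hess x s) (dthess x t) t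
  dttgrad_spec : ∀ (x : EuclideanSpace ℝ (Fin n)) (t : ℝ), HasDerivAt (fun s => dtgrad x s) (dttgrad x t) t
  /-- Assumption 1: `∇ₓₓ f(x;t) ⪰ m·I` uniformly in `x` and `t`. -/
  strong_convex : ∀ (x : EuclideanSpace ℝ (Fin n)) (t : ℝ) (v : EuclideanSpace ℝ (Fin n)),
    m * ‖v‖ ^ 2 ≤ @inner ℝ _ _ v (hess x t v)
  hessInv_left : ∀ (x : EuclideanSpace ℝ (Fin n)) (t : ℝ), ContinuousLinearMap.comp (hessInv x t) (hess x t) =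
    ContinuousLinearMap.id ℝ (EuclideanSpace ℝ (Fin n))
  hessInv_right : ∀ (x : EuclideanSpace ℝ (Fin n)) (t : ℝ), ContinuousLinearMap.comp (hess x t) (hessInv x t) =
    ContinuousLinearMap.id ℝ (EuclideanSpace ℝ (Fin n))
  /-- Assumption 2: bounded derivatives, uniformly in `x` and `t`. -/
  hess_bound : ∀ (x : EuclideanSpace ℝ (Fin n)) (t : ℝ), ‖hess x t‖ ≤ L
  dtgrad_bound : ∀ (x : EuclideanSpace ℝ (Fin n)) (t : ℝ), ‖dtgrad x t‖ ≤ C0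
  d3_bound : ∀ (x : EuclideanSpace ℝ (Fin n)) (t : ℝ), ‖d3 x t‖ ≤ C1
  dthess_bound : ∀ (x : EuclideanSpace ℝ (Fin n)) (t : ℝ), ‖dthess x t‖ ≤ C2
  dttgrad_bound : ∀ (x : EuclideanSpace ℝ (Fin n)) (t : ℝ), ‖dttgrad x t‖ ≤ C3
  /-- `x*(t)` minimizes `f(·;t)` -/
  xstar_min : ∀ t : ℝ, IsMinOn (fun x => f x t) Set.univ (xstar t)
  /-- equivalently, `∇ₓ f(x*(t);t) = 0` -/
  xstar_grad : ∀ t : ℝ, grad (xstar t) t = 0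

/-!
The correction map `y ↦ y - γ ∇ₓf(y;t)` has derivative `I - γ ∇ₓₓf`, a symmetric operator whose
quadratic form lies between `1 - γL` and `1 - γm`; hence it is a `ρ`-contraction fixing `x*(t)`,
and `τ` correction steps contract the error by `ρ^τ`. The prediction map is `σ`-Lipschitz, since
its derivative involves `∇ₓₓₓf` and `∇_{xtx}f` composed with a Hessian inverse of norm at most
`1/m`. At `x*(t)` the prediction is a Newton step for the optimality condition
`∇ₓf(x*(t);t) = 0` advanced in time, so second-order Taylor expansions in `x` and in `t`,
together with `m ‖y - x*(t)‖ ≤ ‖∇ₓf(y;t)‖`, put it within `Γ` of `x*(t + h)`.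
-/

open scoped RealInnerProductSpace

theorem norm_iterate_sub_le_of_lipschitz {G : Type*} [NormedAddCommGroup G] {f : G → G}
    {ρ : ℝ} (hρ : 0 ≤ ρ) (hf : ∀ a b, ‖f a - f b‖ ≤ ρ * ‖a - b‖) {p : G} (hp : f p = p)
    (k : ℕ) (a : G) : ‖f^[k] a - p‖ ≤ ρ ^ k * ‖a - p‖ := by
  induction k with
  | zero => simp
  | succ k ih =>
    calc ‖f^[k + 1] a - p‖ = ‖f (f^[k] a) - f p‖ := by rw [Function.iterate_succ_apply', hp]
      _ ≤ ρ * (ρ ^ k * ‖a - p‖) := (hf _ _).trans (mul_le_mul_of_nonneg_left ih hρ)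
      _ = ρ ^ (k + 1) * ‖a - p‖ := by ring

theorem norm_image_sub_sub_smul_deriv_le {F : Type*} [NormedAddCommGroup F] [NormedSpace ℝ F]
    {g g' : ℝ → F} {K a b : ℝ} (hb : 0 ≤ b) (hg : ∀ s, HasDerivAt g (g' s) s)
    (hK : ∀ s ∈ Set.Icc a (a + b), ‖g' s - g' a‖ ≤ K * (s - a)) :
    ‖g (a + b) - g a - b • g' a‖ ≤ K * b ^ 2 / 2 := by
  let r : ℝ → F := fun s => g s - g a - (s - a) • g' a
  have hr (s : ℝ) : HasDerivAt r (g' s - g' a) s :=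
    ((hg s).sub_const (g a)).sub (by simpa using ((hasDerivAt_id s).sub_const a).smul_const (g' a))
  have hB (s : ℝ) : HasDerivAt (fun s => K * (s - a) ^ 2 / 2) (K * (s - a)) s :=
    ((((hasDerivAt_id s).sub_const a).pow 2).const_mul K).div_const 2 |>.congr_deriv (by
      simp only [Nat.cast_ofNat, id_eq, Nat.add_one_sub_one, pow_one, mul_one]
      ring)
  simpa [r] using image_norm_le_of_norm_deriv_right_le_deriv_boundary
    (fun s _ => (hr s).continuousAt.continuousWithinAt) (fun s _ => (hr s).hasDerivWithinAt)
    (by simp [r]) hB (fun s hs => hK s (Set.Ico_subset_Icc_self hs))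
    (Set.right_mem_Icc.mpr (le_add_of_nonneg_right hb))

section InnerProduct

variable {F : Type*} [NormedAddCommGroup F] [InnerProductSpace ℝ F]

theorem mul_norm_le_norm_of_mul_sq_le_inner {m : ℝ} {v w : F} (h : m * ‖v‖ ^ 2 ≤ ⟪v, w⟫) :
    m * ‖v‖ ≤ ‖w‖ := by
  rcases (norm_nonneg v).eq_or_lt with hv | hv
  · simp [← hv]
  · have := h.trans (real_inner_le_norm v w)
    nlinarith

theorem mul_norm_sub_sq_le_inner_sub_of_hasFDerivAt {g : F → F} {g' : F → F →L[ℝ] F} {m : ℝ}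
    (hg : ∀ z, HasFDerivAt g (g' z) z) (hm : ∀ z v, m * ‖v‖ ^ 2 ≤ ⟪v, g' z v⟫) (x y : F) :
    m * ‖x - y‖ ^ 2 ≤ ⟪g x - g y, x - y⟫ := by
  set d := x - y
  have hline (s : ℝ) : HasDerivAt (fun s : ℝ => ⟪g (y + s • d), d⟫) ⟪g' (y + s • d) d, d⟫ s := by
    have hp : HasDerivAt (fun s : ℝ => y + s • d) d s := by
      simpa using ((hasDerivAt_id s).smul_const d).const_add y
    simpa using ((hg _).comp_hasDerivAt s hp).inner ℝ (hasDerivAt_const s d)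
  have := mul_sub_le_image_sub_of_le_deriv (fun s => (hline s).differentiableAt)
    (fun s => (hline s).deriv ▸ real_inner_comm d (g' _ d) ▸ hm (y + s • d) d) zero_le_one
  simpa [d, inner_sub_left] using this

theorem abs_sub_mul_le_max_mul {γ m L s a : ℝ} (hs : 0 ≤ s) (hm : m * s ≤ a) (hL : a ≤ L * s) :
    |s - γ * a| ≤ max |1 - γ * m| |1 - γ * L| * s := by
  rw [max_mul_of_nonneg _ _ hs, ← abs_of_nonneg hs, ← abs_mul, ← abs_mul, abs_of_nonneg hs]
  rcases le_total 0 γ with hγ | hγ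
  · exact abs_le_max_abs_abs (by nlinarith) (by nlinarith) |>.trans_eq (max_comm _ _)
  · exact abs_le_max_abs_abs (by nlinarith) (by nlinarith)

theorem ContinuousLinearMap.opNorm_le_of_abs_inner_self_le {T : F →L[ℝ] F}
    (hT : (T : F →ₗ[ℝ] F).IsSymmetric) {ρ : ℝ} (hρ : 0 ≤ ρ)
    (h : ∀ x, |⟪T x, x⟫| ≤ ρ * ‖x‖ ^ 2) : ‖T‖ ≤ ρ := by
  rw [T.norm_eq_iSup_rayleighQuotient hT]
  refine ciSup_le fun x => ?_
  rw [rayleighQuotient, reApplyInnerSelf_apply, RCLike.re_to_real, abs_div, abs_sq]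
  exact div_le_of_le_mul₀ (sq_nonneg _) hρ (h x)

end InnerProduct

namespace TVOpt

variable {n : ℕ} (P : TVOpt n)

local notation "E" => EuclideanSpace ℝ (Fin n)

def gradStep (γ t : ℝ) (y : E) : E := y - γ • P.grad y t

def predict (h t : ℝ) (y : E) : E := y - h • P.hessInv y t (P.dtgrad y t)

theorem C0_nonneg : 0 ≤ P.C0 := (norm_nonneg _).trans (P.dtgrad_bound 0 0)
theorem C1_nonneg : 0 ≤ P.C1 := (norm_nonneg (P.d3 0 0)).trans (P.d3_bound 0 0)
theorem C2_nonneg : 0 ≤ P.C2 := (norm_nonneg _).trans (P.dthess_bound 0 0)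

@[simp]
theorem hess_hessInv_apply (x : E) (t : ℝ) (u : E) : P.hess x t (P.hessInv x t u) = u :=
  congrArg (· u) (P.hessInv_right x t)

@[simp]
theorem hessInv_hess_apply (x : E) (t : ℝ) (u : E) : P.hessInv x t (P.hess x t u) = u :=
  congrArg (· u) (P.hessInv_left x t)

theorem norm_hessInv_apply_le (x : E) (t : ℝ) (u : E) : ‖P.hessInv x t u‖ ≤ ‖u‖ / P.m := by
  rw [le_div_iff₀' P.m_pos]
  simpa using mul_norm_le_norm_of_mul_sq_le_inner (P.strong_convex x t (P.hessInv x t u))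

theorem hess_isSymmetric (x : E) (t : ℝ) : (P.hess x t : E →ₗ[ℝ] E).IsSymmetric := by
  have hf : ∀ y, HasFDerivAt (fun z => P.f z t) (innerSL ℝ (P.grad y t)) y := fun y =>
    (P.grad_spec y t).hasFDerivAt
  have hf' : HasFDerivAt (fun y => innerSL ℝ (P.grad y t)) ((innerSL ℝ).comp (P.hess x t)) x :=
    (innerSL ℝ).hasFDerivAt.comp x (P.hess_spec x t)
  intro u w
  simpa [real_inner_comm] using second_derivative_symmetric hf hf' u w

theorem mul_norm_sub_sq_le_inner_grad_sub (t : ℝ) (x y : E) :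
    P.m * ‖x - y‖ ^ 2 ≤ ⟪P.grad x t - P.grad y t, x - y⟫ :=
  mul_norm_sub_sq_le_inner_sub_of_hasFDerivAt (fun z => P.hess_spec z t) (P.strong_convex · t) x y

theorem mul_norm_sub_xstar_le (t : ℝ) (x : E) : P.m * ‖x - P.xstar t‖ ≤ ‖P.grad x t‖ := by
  have h := P.mul_norm_sub_sq_le_inner_grad_sub t x (P.xstar t)
  rw [P.xstar_grad t, sub_zero, real_inner_comm] at h
  exact mul_norm_le_norm_of_mul_sq_le_inner h

theorem norm_id_sub_smul_hess_le (γ : ℝ) (x : E) (t : ℝ) :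
    ‖ContinuousLinearMap.id ℝ E - γ • P.hess x t‖ ≤ max |1 - γ * P.m| |1 - γ * P.L| := by
  refine ContinuousLinearMap.opNorm_le_of_abs_inner_self_le (fun u w => ?_)
    ((abs_nonneg _).trans (le_max_left _ _)) fun v => ?_
  · exact LinearMap.IsSymmetric.id.sub ((P.hess_isSymmetric x t).smul (conj_trivial γ)) u w
  · have hL : ⟪v, P.hess x t v⟫ ≤ P.L * ‖v‖ ^ 2 :=
      calc ⟪v, P.hess x t v⟫ ≤ ‖v‖ * (‖P.hess x t‖ * ‖v‖) :=
            (real_inner_le_norm _ _).trans (by gcongr; exact (P.hess x t).le_opNorm v)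
        _ ≤ ‖v‖ * (P.L * ‖v‖) := by gcongr; exact P.hess_bound x t
        _ = P.L * ‖v‖ ^ 2 := by ring
    simpa only [sub_apply, ContinuousLinearMap.id_apply, smul_apply, inner_sub_left,
      real_inner_self_eq_norm_sq, real_inner_comm, real_inner_smul_right] using
      abs_sub_mul_le_max_mul (γ := γ) (sq_nonneg ‖v‖) (P.strong_convex x t v) hL

theorem norm_gradStep_sub_le (γ t : ℝ) (a b : E) :
    ‖P.gradStep γ t a - P.gradStep γ t b‖ ≤ max |1 - γ * P.m| |1 - γ * P.L| * ‖a - b‖ :=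
  convex_univ.norm_image_sub_le_of_norm_hasFDerivWithin_le
    (fun y _ => ((hasFDerivAt_id y).sub ((P.hess_spec y t).const_smul γ)).hasFDerivWithinAt)
    (fun y _ => P.norm_id_sub_smul_hess_le γ y t) (Set.mem_univ b) (Set.mem_univ a)

theorem gradStep_xstar (γ t : ℝ) : P.gradStep γ t (P.xstar t) = P.xstar t := by
  simp [gradStep, P.xstar_grad]

theorem norm_gradStep_iterate_sub_xstar_le (γ t : ℝ) (τ : ℕ) (a : E) :
    ‖(P.gradStep γ t)^[τ] a - P.xstar t‖ ≤
      max |1 - γ * P.m| |1 - γ * P.L| ^ τ * ‖a - P.xstar t‖ :=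
  norm_iterate_sub_le_of_lipschitz ((abs_nonneg _).trans (le_max_left _ _))
    (P.norm_gradStep_sub_le γ t) (P.gradStep_xstar γ t) τ a

theorem norm_hess_sub_hess_le (t : ℝ) (x y : E) :
    ‖P.hess x t - P.hess y t‖ ≤ P.C1 * ‖x - y‖ :=
  convex_univ.norm_image_sub_le_of_norm_hasFDerivWithin_le
    (fun z _ => (P.d3_spec z t).hasFDerivWithinAt) (fun z _ => P.d3_bound z t)
    (Set.mem_univ y) (Set.mem_univ x)

theorem norm_hess_sub_hess_time_le (x : E) (s t : ℝ) :
    ‖P.hess x t - P.hess x s‖ ≤ P.C2 * |t - s| := by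
  simpa only [Real.norm_eq_abs] using convex_univ.norm_image_sub_le_of_norm_hasDerivWithin_le
    (fun r _ => (P.dthess_spec x r).hasDerivWithinAt) (fun r _ => P.dthess_bound x r)
    (Set.mem_univ s) (Set.mem_univ t)

theorem norm_dtgrad_sub_dtgrad_le (t : ℝ) (x y : E) :
    ‖P.dtgrad x t - P.dtgrad y t‖ ≤ P.C2 * ‖x - y‖ := by
  -- `∇_{tx} f` is the time derivative of `∇ₓ f`, whose `x`-increments vary in `t` at rate `C₂`
  have hmixed (s : ℝ) : ‖(P.grad x s - P.grad y s) - (P.grad x t - P.grad y t)‖ ≤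
      P.C2 * ‖x - y‖ * ‖s - t‖ := by
    have := convex_univ.norm_image_sub_le_of_norm_hasFDerivWithin_le
      (f := fun z => P.grad z s - P.grad z t)
      (fun z _ => ((P.hess_spec z s).sub (P.hess_spec z t)).hasFDerivWithinAt)
      (fun z _ => P.norm_hess_sub_hess_time_le z t s) (Set.mem_univ y) (Set.mem_univ x)
    rwa [sub_sub_sub_comm, Real.norm_eq_abs, mul_right_comm]
  exact ((P.dtgrad_spec x t).sub (P.dtgrad_spec y t)).le_of_lip'
    (mul_nonneg P.C2_nonneg (norm_nonneg _)) (Filter.Eventually.of_forall hmixed)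

theorem norm_hessInv_dtgrad_sub_le (t : ℝ) (a b : E) :
    ‖P.hessInv a t (P.dtgrad a t) - P.hessInv b t (P.dtgrad b t)‖ ≤
      (P.C0 * P.C1 / P.m ^ 2 + P.C2 / P.m) * ‖a - b‖ := by
  set u := P.hessInv b t (P.dtgrad b t) with hu_def
  have hid : P.hessInv a t (P.dtgrad a t) - u = P.hessInv a t (P.dtgrad a t - P.dtgrad b t) +
      P.hessInv a t ((P.hess b t - P.hess a t) u) := by
    simp only [hu_def, sub_apply, hess_hessInv_apply, map_sub, hessInv_hess_apply]
    abel
  have hu : ‖u‖ ≤ P.C0 / P.m := (P.norm_hessInv_apply_le b t _).trans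
    (div_le_div_of_nonneg_right (P.dtgrad_bound b t) P.m_pos.le)
  calc _ ≤ ‖P.dtgrad a t - P.dtgrad b t‖ / P.m + ‖(P.hess b t - P.hess a t) u‖ / P.m := by
        rw [hid]
        exact (norm_add_le _ _).trans
          (add_le_add (P.norm_hessInv_apply_le a t _) (P.norm_hessInv_apply_le a t _))
    _ ≤ P.C2 * ‖a - b‖ / P.m + P.C1 * ‖b - a‖ * (P.C0 / P.m) / P.m := by
        have := P.m_pos
        have := P.C1_nonneg
        gcongr
        · exact P.norm_dtgrad_sub_dtgrad_le t a b
        · exact ((P.hess b t - P.hess a t).le_opNorm u).trans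
            (mul_le_mul (P.norm_hess_sub_hess_le t b a) hu (norm_nonneg u) (by positivity))
    _ = (P.C0 * P.C1 / P.m ^ 2 + P.C2 / P.m) * ‖a - b‖ := by
        rw [norm_sub_rev b a]
        field_simp
        ring

theorem norm_predict_sub_le {h : ℝ} (hh : 0 ≤ h) (t : ℝ) (a b : E) :
    ‖P.predict h t a - P.predict h t b‖ ≤
      (1 + h * (P.C0 * P.C1 / P.m ^ 2 + P.C2 / P.m)) * ‖a - b‖ :=
  calc ‖P.predict h t a - P.predict h t b‖
      = ‖(a - b) - h • (P.hessInv a t (P.dtgrad a t) - P.hessInv b t (P.dtgrad b t))‖ := by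
        congr 1
        simp only [predict, smul_sub]
        abel
    _ ≤ ‖a - b‖ + h * ((P.C0 * P.C1 / P.m ^ 2 + P.C2 / P.m) * ‖a - b‖) := by
        refine (norm_sub_le _ _).trans ?_
        rw [norm_smul, Real.norm_of_nonneg hh]
        gcongr
        exact P.norm_hessInv_dtgrad_sub_le t a b
    _ = (1 + h * (P.C0 * P.C1 / P.m ^ 2 + P.C2 / P.m)) * ‖a - b‖ := by ring

theorem norm_grad_add_sub_sub_hess_le (t : ℝ) (x w : E) :
    ‖P.grad (x + w) t - P.grad x t - P.hess x t w‖ ≤ P.C1 * ‖w‖ ^ 2 / 2 := by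
  have hline (s : ℝ) :
      HasDerivAt (fun s : ℝ => P.grad (x + s • w) t) (P.hess (x + s • w) t w) s :=
    (P.hess_spec _ t).comp_hasDerivAt s
      (by simpa using ((hasDerivAt_id s).smul_const w).const_add x)
  have hlip (s : ℝ) (hs : s ∈ Set.Icc 0 (0 + 1)) :
      ‖P.hess (x + s • w) t w - P.hess (x + (0 : ℝ) • w) t w‖ ≤ P.C1 * ‖w‖ ^ 2 * (s - 0) :=
    calc _ ≤ ‖P.hess (x + s • w) t - P.hess (x + (0 : ℝ) • w) t‖ * ‖w‖ := by
          rw [← sub_apply]; exact ContinuousLinearMap.le_opNorm _ _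
      _ ≤ P.C1 * ‖(x + s • w) - (x + (0 : ℝ) • w)‖ * ‖w‖ := by
          gcongr; exact P.norm_hess_sub_hess_le t _ _
      _ = P.C1 * ‖w‖ ^ 2 * (s - 0) := by
          rw [zero_smul, add_zero, add_sub_cancel_left, norm_smul, Real.norm_of_nonneg hs.1]
          ring
  simpa using norm_image_sub_sub_smul_deriv_le zero_le_one hline hlip

theorem norm_grad_add_time_sub_sub_dtgrad_le (x : E) (t : ℝ) {h : ℝ} (hh : 0 ≤ h) :
    ‖P.grad x (t + h) - P.grad x t - h • P.dtgrad x t‖ ≤ P.C3 * h ^ 2 / 2 :=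
  norm_image_sub_sub_smul_deriv_le hh (P.dtgrad_spec x) fun s hs => by
    simpa only [Real.norm_eq_abs, abs_of_nonneg (sub_nonneg.2 hs.1)] using
      convex_univ.norm_image_sub_le_of_norm_hasDerivWithin_le
        (fun r _ => (P.dttgrad_spec x r).hasDerivWithinAt) (fun r _ => P.dttgrad_bound x r)
        (Set.mem_univ t) (Set.mem_univ s)

theorem norm_predict_xstar_sub_xstar_le {h : ℝ} (hh : 0 ≤ h) (t : ℝ) :
    ‖P.predict h t (P.xstar t) - P.xstar (t + h)‖ ≤
      h ^ 2 / 2 * (P.C0 ^ 2 * P.C1 / P.m ^ 3 + 2 * P.C0 * P.C2 / P.m ^ 2 + P.C3 / P.m) := by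
  set z := P.xstar t
  set w := -(h • P.hessInv z t (P.dtgrad z t)) with hw_def
  have hw : ‖w‖ ≤ h * P.C0 / P.m := by
    rw [norm_neg, norm_smul, Real.norm_of_nonneg hh, mul_div_assoc]
    exact mul_le_mul_of_nonneg_left ((P.norm_hessInv_apply_le z t _).trans
      (div_le_div_of_nonneg_right (P.dtgrad_bound z t) P.m_pos.le)) hh
  -- `z` is stationary at time `t` and `w` is the Newton step, so only second-order terms remain
  have hsplit : P.grad (z + w) (t + h) =
      (P.grad (z + w) (t + h) - P.grad z (t + h) - P.hess z (t + h) w) +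
      (P.grad z (t + h) - P.grad z t - h • P.dtgrad z t) + (P.hess z (t + h) - P.hess z t) w := by
    have hnewton : P.hess z t w = -(h • P.dtgrad z t) := by simp [hw_def]
    rw [sub_apply, hnewton, P.xstar_grad t]
    abel
  have hgrad : ‖P.grad (z + w) (t + h)‖ ≤
      P.C1 * ‖w‖ ^ 2 / 2 + P.C3 * h ^ 2 / 2 + P.C2 * h * ‖w‖ := by
    rw [hsplit]
    refine (norm_add₃_le ..).trans (add_le_add_three (P.norm_grad_add_sub_sub_hess_le _ z w)
      (P.norm_grad_add_time_sub_sub_dtgrad_le z t hh) ?_)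
    refine (ContinuousLinearMap.le_opNorm _ _).trans (mul_le_mul_of_nonneg_right ?_ (norm_nonneg w))
    simpa [abs_of_nonneg hh] using P.norm_hess_sub_hess_time_le z t (t + h)
  have hm := P.m_pos
  have key : P.m * ‖z + w - P.xstar (t + h)‖ ≤
      P.C1 * (h * P.C0 / P.m) ^ 2 / 2 + P.C3 * h ^ 2 / 2 + P.C2 * h * (h * P.C0 / P.m) := by
    have := P.C1_nonneg
    have := P.C2_nonneg
    refine (P.mul_norm_sub_xstar_le _ _).trans (hgrad.trans ?_)
    gcongr
  calc ‖P.predict h t z - P.xstar (t + h)‖ = ‖z + w - P.xstar (t + h)‖ := by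
        rw [predict, hw_def, ← sub_eq_add_neg]
    _ ≤ (P.C1 * (h * P.C0 / P.m) ^ 2 / 2 + P.C3 * h ^ 2 / 2 + P.C2 * h * (h * P.C0 / P.m)) / P.m :=
        (le_div_iff₀' hm).2 key
    _ = _ := by
        field_simp
        ring

theorem norm_predict_sub_xstar_le {h : ℝ} (hh : 0 ≤ h) (t : ℝ) (y : E) :
    ‖P.predict h t y - P.xstar (t + h)‖ ≤
      (1 + h * (P.C0 * P.C1 / P.m ^ 2 + P.C2 / P.m)) * ‖y - P.xstar t‖ +
        h ^ 2 / 2 * (P.C0 ^ 2 * P.C1 / P.m ^ 3 + 2 * P.C0 * P.C2 / P.m ^ 2 + P.C3 / P.m) :=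
  (norm_sub_le_norm_sub_add_norm_sub _ (P.predict h t (P.xstar t)) _).trans
    (add_le_add (P.norm_predict_sub_le hh t _ _) (P.norm_predict_xstar_sub_xstar_le hh t))

end TVOpt

theorem gtt_one_step_recursion_general (n : ℕ) (P : TVOpt n) (h : ℝ) (hh : 0 < h)
    (γ : ℝ) (τ : ℕ)
    (ρ : ℝ) (hρ : ρ = max |1 - γ * P.m| |1 - γ * P.L|)
    (σ : ℝ) (hσ : σ = 1 + h * (P.C0 * P.C1 / P.m ^ 2 + P.C2 / P.m))
    (Γ : ℝ) (hΓ : Γ = h ^ 2 / 2 *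
      (P.C0 ^ 2 * P.C1 / P.m ^ 3 + 2 * P.C0 * P.C2 / P.m ^ 2 + P.C3 / P.m))
    (x : ℕ → EuclideanSpace ℝ (Fin n))
    (hrec : ∀ k : ℕ, x (k + 1) =
      (fun y => y - γ • P.grad y (((k : ℝ) + 1) * h))^[τ]
        (x k - h • P.hessInv (x k) ((k : ℝ) * h) (P.dtgrad (x k) ((k : ℝ) * h)))) :
    ∀ k : ℕ,
      ‖x (k + 1) - P.xstar (((k : ℝ) + 1) * h)‖ ≤
        ρ ^ τ * σ * ‖x k - P.xstar ((k : ℝ) * h)‖ + ρ ^ τ * Γ := by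
  intro k
  have hρ0 : 0 ≤ ρ := hρ ▸ (abs_nonneg _).trans (le_max_left _ _)
  have hx : x (k + 1) = (P.gradStep γ (k * h + h))^[τ] (P.predict h (k * h) (x k)) := by
    rw [hrec k, add_one_mul]
    rfl
  calc ‖x (k + 1) - P.xstar (((k : ℝ) + 1) * h)‖
      ≤ ρ ^ τ * ‖P.predict h (k * h) (x k) - P.xstar (k * h + h)‖ := by
        rw [hx, add_one_mul, hρ]
        exact P.norm_gradStep_iterate_sub_xstar_le γ _ τ _
    _ ≤ ρ ^ τ * (σ * ‖x k - P.xstar (k * h)‖ + Γ) := by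
        rw [hσ, hΓ]
        gcongr
        exact P.norm_predict_sub_xstar_le hh.le _ (x k)
    _ = ρ ^ τ * σ * ‖x k - P.xstar ((k : ℝ) * h)‖ + ρ ^ τ * Γ := by ring

/-- The full GTT prediction-correction iteration satisfies the
one-step recursion `‖x_(k+1) − x*(t_(k+1))‖ ≤ ρ^τ·σ·‖x_k − x*(t_k)‖ + ρ^τ·Γ`. -/
theorem gtt_one_step_recursion (n : ℕ) (P : TVOpt n) (h : ℝ) (hh : 0 < h)
    (γ : ℝ) (τ : ℕ) (hτ : 1 ≤ τ) (hγ0 : 0 < γ) (hγL : γ < 2 / P.L)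
    (ρ : ℝ) (hρ : ρ = max |1 - γ * P.m| |1 - γ * P.L|)
    (σ : ℝ) (hσ : σ = 1 + h * (P.C0 * P.C1 / P.m ^ 2 + P.C2 / P.m))
    (Γ : ℝ) (hΓ : Γ = h ^ 2 / 2 *
      (P.C0 ^ 2 * P.C1 / P.m ^ 3 + 2 * P.C0 * P.C2 / P.m ^ 2 + P.C3 / P.m))
    (x : ℕ → EuclideanSpace ℝ (Fin n))
    (hrec : ∀ k : ℕ, x (k + 1) =
      (fun y => y - γ • P.grad y (((k : ℝ) + 1) * h))^[τ]
        (x k - h • P.hessInv (x k) ((k : ℝ) * h) (P.dtgrad (x k) ((k : ℝ) * h)))) :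
    ∀ k : ℕ,
      ‖x (k + 1) - P.xstar (((k : ℝ) + 1) * h)‖ ≤
        ρ ^ τ * σ * ‖x k - P.xstar ((k : ℝ) * h)‖ + ρ ^ τ * Γ :=
  gtt_one_step_recursion_general n P h hh γ τ ρ hρ σ hσ Γ hΓ x hrec
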